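/- arXiv:2604.03161 — 6 statements merged into one kernel-verified Lean document; each statement's English description precedes it below -/
import Mathlib

section
/- The sequence n_d = (-1)^{d-1}/d^2 satisfies, for every integer d > 1, the recursion 0 = \sum_{\Theta} (\prod_i d_i n_{d_i}) / (\prod_j \nu_j(\Theta)!), where the sum is over partitions \Theta : d = d_1 + ... + d_k of d into positive integers, and \nu_j(\Theta) is the number of parts of \Theta equal to j. -/
namespace BPaux

open Finset

/-- The weight of a part. -/
def f (i : ℕ) : ℚ := (i : ℚ) * ((-1 : ℚ) ^ (i - 1) / (i : ℚ) ^ 2)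

/-- The denominator: product of factorials of multiplicities, over `range N`. -/
def Dn (N : ℕ) (P : Multiset ℕ) : ℚ :=
  ∏ j ∈ Finset.range N, (Nat.factorial (P.count j) : ℚ)

lemma Dn_pos (N : ℕ) (P : Multiset ℕ) : 0 < Dn N P :=
  Finset.prod_pos fun j _ => by exact_mod_cast Nat.factorial_pos _

lemma Dn_ne_zero (N : ℕ) (P : Multiset ℕ) : Dn N P ≠ 0 := (Dn_pos N P).ne'

lemma Dn_cons {N k : ℕ} (hk : k < N) (P : Multiset ℕ) :
    Dn N (k ::ₘ P) = ((P.count k : ℚ) + 1) * Dn N P := by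
  unfold Dn
  rw [← Finset.mul_prod_erase _ _ (Finset.mem_range.2 hk),
      ← Finset.mul_prod_erase _ (fun j => (Nat.factorial (P.count j) : ℚ))
        (Finset.mem_range.2 hk)]
  have h1 : ∀ j ∈ (Finset.range N).erase k,
      ((Multiset.count j (k ::ₘ P)).factorial : ℚ)
        = ((Multiset.count j P).factorial : ℚ) := by
    intro j hj
    rw [Multiset.count_cons_of_ne (Finset.ne_of_mem_erase hj)]
  rw [Finset.prod_congr rfl h1, Multiset.count_cons_self, Nat.factorial_succ]
  push_cast
  ring

lemma part_le {m : ℕ} (Θ : Nat.Partition m) {j : ℕ} (hj : j ∈ Θ.parts) : j ≤ m :=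
  (Multiset.le_sum_of_mem hj).trans_eq Θ.parts_sum

/-- `Dn` does not depend on `N` as long as `N` exceeds all elements. -/
lemma Dn_eq {m N : ℕ} (hN : m + 1 ≤ N) (Θ : Nat.Partition m) :
    Dn N Θ.parts = Dn (m + 1) Θ.parts := by
  unfold Dn
  apply (Finset.prod_subset (Finset.range_subset_range.2 hN) ?_).symm
  intro j hj hj'
  have : j ∉ Θ.parts := fun h => by
    have := part_le Θ h
    simp only [Finset.mem_range] at hj'
    omega
  rw [Multiset.count_eq_zero_of_notMem this, Nat.factorial_zero, Nat.cast_one]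

/-- The quantity whose vanishing (for `m > 1`) we must establish. -/
def a (m : ℕ) : ℚ :=
  ∑ Ψ : Nat.Partition m, (Ψ.parts.map f).prod / Dn (m + 1) Ψ.parts

lemma a_zero : a 0 = 1 := by
  rw [a, Fintype.sum_unique]
  simp [Dn]

/-- Pointing lemma: summing `count k · weight` over partitions of `d` picks up
`f k` times the corresponding sum over partitions of `d - k`. -/
lemma key {d k : ℕ} (hk : 1 ≤ k) (hkd : k ≤ d) :
    ∑ Θ : Nat.Partition d,
        (Θ.parts.count k : ℚ) * ((Θ.parts.map f).prod / Dn (d + 1) Θ.parts)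
      = f k * a (d - k) := by
  classical
  rw [← Finset.sum_filter_of_ne (s := Finset.univ)
      (p := fun Θ : Nat.Partition d => k ∈ Θ.parts)]
  swap
  · intro Θ _ h
    by_contra hmem
    rw [Multiset.count_eq_zero_of_notMem hmem] at h
    simp at h
  · rw [a, Finset.mul_sum]
    refine Finset.sum_bij'
      (fun Θ (hΘ : Θ ∈ Finset.univ.filter fun Θ : Nat.Partition d => k ∈ Θ.parts) =>
        (⟨Θ.parts.erase k, fun hj => Θ.parts_pos (Multiset.mem_of_mem_erase hj), by
          have h1 : k ∈ Θ.parts := by simpa using hΘ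
          have := Θ.parts_sum
          have h2 := Multiset.cons_erase h1
          have : k + (Θ.parts.erase k).sum = d := by
            rw [← Multiset.sum_cons, h2, Θ.parts_sum]
          omega⟩ : Nat.Partition (d - k)))
      (fun Ψ _ =>
        (⟨k ::ₘ Ψ.parts, fun hj => by
            rcases Multiset.mem_cons.1 hj with h | h
            · omega
            · exact Ψ.parts_pos h, by
          rw [Multiset.sum_cons, Ψ.parts_sum]; omega⟩ : Nat.Partition d))
      ?_ ?_ ?_ ?_ ?_
    · intro Θ hΘ; exact Finset.mem_univ _
    · intro Ψ hΨ
      simp only [Finset.mem_filter, Finset.mem_univ, true_and]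
      exact Multiset.mem_cons_self _ _
    · intro Θ hΘ
      have h1 : k ∈ Θ.parts := by simpa using hΘ
      exact Nat.Partition.ext (Multiset.cons_erase h1)
    · intro Ψ hΨ
      exact Nat.Partition.ext (Multiset.erase_cons_head _ _)
    · intro Θ hΘ
      have h1 : k ∈ Θ.parts := by simpa using hΘ
      set P := Θ.parts.erase k with hP
      have hparts : Θ.parts = k ::ₘ P := (Multiset.cons_erase h1).symm
      show (Multiset.count k Θ.parts : ℚ) * _ = f k * ((Multiset.map f P).prod / Dn (d - k + 1) P)
      rw [hparts]
      rw [Multiset.count_cons_self, Multiset.map_cons, Multiset.prod_cons,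
        Dn_cons (by omega) P]
      have hDeq : Dn (d + 1) P = Dn (d - k + 1) P := by
        have := Dn_eq (m := d - k) (N := d + 1) (by omega)
          ⟨P, fun hj => Θ.parts_pos (Multiset.mem_of_mem_erase hj), by
            have : k + P.sum = d := by
              rw [← Multiset.sum_cons, ← hparts, Θ.parts_sum]
            omega⟩
        exact this
      rw [hDeq]
      have hc : ((P.count k : ℚ) + 1) ≠ 0 := by positivity
      have hD : Dn (d - k + 1) P ≠ 0 := Dn_ne_zero _ _
      push_cast
      field_simp

/-- For multisets with entries in `[1, d]`, the sum equals `∑ k·count k`. -/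
lemma sum_count_mul (d : ℕ) (P : Multiset ℕ) (hP : ∀ j ∈ P, 1 ≤ j ∧ j ≤ d) :
    P.sum = ∑ k ∈ Finset.Icc 1 d, k * P.count k := by
  classical
  induction P using Multiset.induction with
  | empty => simp
  | cons a s ih =>
    have ha : a ∈ Finset.Icc 1 d := by
      have := hP a (Multiset.mem_cons_self a s); simp [Finset.mem_Icc]; omega
    have ihs := ih fun j hj => hP j (Multiset.mem_cons_of_mem hj)
    rw [Multiset.sum_cons, ihs]
    have : ∀ k ∈ Finset.Icc 1 d,
        k * (a ::ₘ s).count k = k * s.count k + (if k = a then a else 0) := by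
      intro k _
      rcases eq_or_ne k a with rfl | h
      · simp [Multiset.count_cons_self, Nat.mul_succ]
      · simp [Multiset.count_cons_of_ne h, h]
    rw [Finset.sum_congr rfl this, Finset.sum_add_distrib, Finset.sum_ite_eq' _ a, if_pos ha]
    omega

/-- The key recursion. -/
lemma a_rec {d : ℕ} (hd : 1 ≤ d) :
    (d : ℚ) * a d = ∑ k ∈ Finset.Icc 1 d, (-1 : ℚ) ^ (k - 1) * a (d - k) := by
  classical
  have step1 : (d : ℚ) * a d = ∑ k ∈ Finset.Icc 1 d, ((k : ℚ) * f k) * a (d - k) := by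
    rw [a, Finset.mul_sum]
    have hterm : ∀ Θ : Nat.Partition d,
        (d : ℚ) * ((Θ.parts.map f).prod / Dn (d + 1) Θ.parts)
          = ∑ k ∈ Finset.Icc 1 d,
              (k : ℚ) * ((Θ.parts.count k : ℚ) *
                ((Θ.parts.map f).prod / Dn (d + 1) Θ.parts)) := by
      intro Θ
      have hsum : Θ.parts.sum = ∑ k ∈ Finset.Icc 1 d, k * Θ.parts.count k :=
        sum_count_mul d Θ.parts fun j hj => ⟨Θ.parts_pos hj, part_le Θ hj⟩
      have hd' : (d : ℚ) = ∑ k ∈ Finset.Icc 1 d, (k : ℚ) * (Θ.parts.count k : ℚ) := by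
        rw_mod_cast [← hsum, Θ.parts_sum]
      rw [hd', Finset.sum_mul]
      apply Finset.sum_congr rfl
      intro k _
      ring
    rw [Finset.sum_congr rfl fun Θ _ => hterm Θ, Finset.sum_comm]
    apply Finset.sum_congr rfl
    intro k hk
    simp only [Finset.mem_Icc] at hk
    rw [← Finset.mul_sum, key hk.1 hk.2]
    ring
  rw [step1]
  apply Finset.sum_congr rfl
  intro k hk
  simp only [Finset.mem_Icc] at hk
  have hk0 : (k : ℚ) ≠ 0 := Nat.cast_ne_zero.2 (by omega)
  congr 1
  rw [f]
  field_simp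

lemma a_one : a 1 = 1 := by
  have h := a_rec (d := 1) le_rfl
  simp [a_zero] at h
  linarith

lemma a_eq_zero {d : ℕ} (hd : 2 ≤ d) : a d = 0 := by
  induction d using Nat.strong_induction_on with
  | _ d ih =>
    have hrec := a_rec (d := d) (by omega)
    have hsplit : ∑ k ∈ Finset.Icc 1 d, (-1 : ℚ) ^ (k - 1) * a (d - k) = 0 := by
      have hval : ∀ k ∈ Finset.Icc 1 d, (-1 : ℚ) ^ (k - 1) * a (d - k)
          = (if k = d - 1 then (-1 : ℚ) ^ (d - 2) else 0)
            + (if k = d then (-1 : ℚ) ^ (d - 1) else 0) := by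
        intro k hk
        simp only [Finset.mem_Icc] at hk
        rcases eq_or_ne k d with hkd | hkd
        · have h1 : ¬ (k = d - 1) := by omega
          rw [if_neg h1, if_pos hkd, hkd, Nat.sub_self, a_zero, zero_add, mul_one]
        rcases eq_or_ne k (d - 1) with hkd1 | hkd1
        · have h1 : d - k = 1 := by omega
          have h2 : k - 1 = d - 2 := by omega
          rw [if_pos hkd1, if_neg hkd, h1, h2, a_one, mul_one, add_zero]
        · have h2 : 2 ≤ d - k := by omega
          have h3 : d - k < d := by omega
          rw [if_neg hkd1, if_neg hkd, ih (d - k) h3 h2, mul_zero, add_zero]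
      rw [Finset.sum_congr rfl hval, Finset.sum_add_distrib,
        Finset.sum_ite_eq' _ (d - 1), Finset.sum_ite_eq' _ d,
        if_pos (by simp [Finset.mem_Icc]; omega), if_pos (by simp [Finset.mem_Icc]; omega)]
      have : (-1 : ℚ) ^ (d - 1) = -(-1 : ℚ) ^ (d - 2) := by
        have h : d - 1 = (d - 2) + 1 := by omega
        rw [h, pow_succ]
        ring
      rw [this]; ring
    have hd0 : (d : ℚ) ≠ 0 := by positivity
    have := hrec.trans hsplit
    exact (mul_eq_zero.1 this).resolve_left hd0

end BPaux

/-- The sequence `n d = (-1)^(d-1)/d^2` satisfies, for every `d > 1`, the recursion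
`0 = ∑_Θ (∏_i d_i n_{d_i}) / (∏_j ν_j(Θ)!)`, the sum running over partitions `Θ` of `d`,
where `ν_j(Θ)` is the number of parts of `Θ` equal to `j`. -/
theorem bryan_pandharipande_recursion (d : ℕ) (hd : 1 < d) :
    (0 : ℚ) = ∑ Θ : Nat.Partition d,
      (Θ.parts.map (fun i : ℕ => (i : ℚ) * ((-1 : ℚ) ^ (i - 1) / (i : ℚ) ^ 2))).prod /
        ∏ j ∈ Finset.range (d + 1), (Nat.factorial (Θ.parts.count j) : ℚ) := by
  have := BPaux.a_eq_zero (d := d) hd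
  rw [BPaux.a] at this
  exact this.symm
end

section
/- The sequence n_d = (-1)^{d-1}/d^2 is the unique sequence of rationals with n_1 = 1 satisfying, for all d > 1, the recursion 0 = \sum_{\Theta partition of d} (\prod_i d_i n_{d_i}) / (\prod_j \nu_j(\Theta)!). -/
open Multiset Finset

namespace BPUnique

/-- Weight of a multiset of parts. -/
noncomputable def W (s : Multiset ℕ) : ℚ :=
  (s.map (fun i : ℕ => (-1 : ℚ) ^ (i - 1) / i)).prod /
    ∏ j ∈ s.toFinset, (Nat.factorial (s.count j) : ℚ)

noncomputable def c (d : ℕ) : ℚ := ∑ Θ : Nat.Partition d, W Θ.parts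

lemma F_ne_zero (s : Multiset ℕ) :
    (∏ j ∈ s.toFinset, (Nat.factorial (s.count j) : ℚ)) ≠ 0 :=
  Finset.prod_ne_zero_iff.2 fun j _ => Nat.cast_ne_zero.2 (Nat.factorial_ne_zero _)

lemma F_erase {s : Multiset ℕ} {k : ℕ} (hk : k ∈ s) :
    (∏ j ∈ s.toFinset, (Nat.factorial (s.count j) : ℚ)) =
      (s.count k : ℚ) * ∏ j ∈ (s.erase k).toFinset, (Nat.factorial ((s.erase k).count j) : ℚ) := by
  have hsub : (s.erase k).toFinset ⊆ s.toFinset := by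
    intro x hx
    simp only [Multiset.mem_toFinset] at hx ⊢
    exact Multiset.mem_of_mem_erase hx
  have h1 : (∏ j ∈ (s.erase k).toFinset, (Nat.factorial ((s.erase k).count j) : ℚ)) =
      ∏ j ∈ s.toFinset, (Nat.factorial ((s.erase k).count j) : ℚ) := by
    refine Finset.prod_subset (f := fun j => (Nat.factorial ((s.erase k).count j) : ℚ)) hsub fun x _ hx => ?_
    have : (s.erase k).count x = 0 := by
      rw [Multiset.count_eq_zero]; simpa using hx
    simp [this]
  rw [h1]
  have hkF : k ∈ s.toFinset := Multiset.mem_toFinset.2 hk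
  rw [← Finset.mul_prod_erase _ _ hkF,
    ← Finset.mul_prod_erase _ (fun j => (Nat.factorial ((s.erase k).count j) : ℚ)) hkF]
  have h2 : ∏ j ∈ s.toFinset.erase k, (Nat.factorial ((s.erase k).count j) : ℚ) =
      ∏ j ∈ s.toFinset.erase k, (Nat.factorial (s.count j) : ℚ) :=
    Finset.prod_congr rfl fun j hj => by
      rw [Multiset.count_erase_of_ne (Finset.ne_of_mem_erase hj) s]
  rw [h2, Multiset.count_erase_self, ← mul_assoc]
  congr 1
  have hpos : 1 ≤ s.count k := Multiset.one_le_count_iff_mem.2 hk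
  rw [show s.count k = (s.count k - 1) + 1 from (Nat.succ_pred_eq_of_pos hpos).symm,
    Nat.factorial_succ]
  push_cast [Nat.succ_pred_eq_of_pos hpos]
  ring

lemma aux_alg (cnt fk P F : ℚ) (h : cnt ≠ 0) :
    cnt * ((fk * P) / (cnt * F)) = fk * (P / F) := by
  rcases eq_or_ne F 0 with hF | hF
  · simp [hF]
  · field_simp

lemma W_erase {s : Multiset ℕ} {k : ℕ} (hk : k ∈ s) :
    (s.count k : ℚ) * W s = ((-1 : ℚ) ^ (k - 1) / k) * W (s.erase k) := by
  have hnum : s.map (fun i : ℕ => (-1 : ℚ) ^ (i - 1) / i) =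
      ((-1 : ℚ) ^ (k - 1) / k) ::ₘ (s.erase k).map (fun i : ℕ => (-1 : ℚ) ^ (i - 1) / i) := by
    conv_lhs => rw [← Multiset.cons_erase hk]
    rw [Multiset.map_cons]
  rw [W, W, hnum, Multiset.prod_cons, F_erase hk]
  exact aux_alg _ _ _ _ (Nat.cast_ne_zero.2 (Multiset.count_ne_zero.2 hk))

lemma count_mul_W_sum {d k : ℕ} (hk1 : 1 ≤ k) (hkd : k ≤ d) :
    ∑ Θ : Nat.Partition d, (Θ.parts.count k : ℚ) * W Θ.parts =
      ((-1 : ℚ) ^ (k - 1) / k) * c (d - k) := by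
  rw [c, Finset.mul_sum]
  rw [← Finset.sum_filter_of_ne (p := fun Θ : Nat.Partition d => k ∈ Θ.parts)
    (fun Θ _ h => by
      by_contra hmem
      exact h (by simp [Multiset.count_eq_zero_of_notMem hmem]))]
  refine Finset.sum_bij'
    (fun Θ hΘ => (⟨Θ.parts.erase k,
      fun {i} hi => Θ.parts_pos (Multiset.mem_of_mem_erase hi), ?_⟩ : Nat.Partition (d - k)))
    (fun Θ' _ => (⟨k ::ₘ Θ'.parts,
      fun {i} hi => by
        rcases Multiset.mem_cons.1 hi with h | h
        · exact h ▸ hk1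
        · exact Θ'.parts_pos h, ?_⟩ : Nat.Partition d))
    (fun Θ hΘ => Finset.mem_univ _) (fun Θ' hΘ' => ?_) (fun Θ hΘ => ?_) (fun Θ' hΘ' => ?_)
    (fun Θ hΘ => ?_)
  · -- sum of erased parts
    have hmem : k ∈ Θ.parts := by simpa using hΘ
    have := Θ.parts_sum
    have hc : k + (Θ.parts.erase k).sum = d := by
      rw [← Multiset.sum_cons, Multiset.cons_erase hmem, this]
    omega
  · -- sum of cons parts
    rw [Multiset.sum_cons, Θ'.parts_sum]
    omega
  · -- membership of j Θ' in filter
    simp [Multiset.mem_cons_self]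
  · -- left inverse
    have hmem : k ∈ Θ.parts := by simpa using hΘ
    exact Nat.Partition.ext (by simp [Multiset.cons_erase hmem])
  · -- right inverse
    exact Nat.Partition.ext (by simp [Multiset.erase_cons_head])
  · -- values agree
    have hmem : k ∈ Θ.parts := by simpa using hΘ
    simpa using W_erase hmem

lemma pointing {d : ℕ} (hd : 1 ≤ d) :
    (d : ℚ) * c d = ∑ k ∈ Finset.Icc 1 d, (-1 : ℚ) ^ (k - 1) * c (d - k) := by
  have key : ∀ Θ : Nat.Partition d,
      (d : ℚ) * W Θ.parts = ∑ k ∈ Finset.Icc 1 d, ((k : ℚ) * (Θ.parts.count k : ℚ)) * W Θ.parts := by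
    intro Θ
    have h1 : Θ.parts.sum = ∑ m ∈ Θ.parts.toFinset, Θ.parts.count m * m := by
      conv_lhs => rw [← Multiset.map_id Θ.parts]
      rw [Finset.sum_multiset_map_count]
      simp [smul_eq_mul]
    have hsub : Θ.parts.toFinset ⊆ Finset.Icc 1 d := by
      intro m hm
      rw [Multiset.mem_toFinset] at hm
      exact Finset.mem_Icc.2 ⟨Θ.parts_pos hm, (Multiset.le_sum_of_mem hm).trans_eq Θ.parts_sum⟩
    have h2 : Θ.parts.sum = ∑ m ∈ Finset.Icc 1 d, Θ.parts.count m * m := by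
      rw [h1]
      refine Finset.sum_subset hsub fun x _ hx => ?_
      rw [Multiset.count_eq_zero_of_notMem (by simpa using hx), zero_mul]
    have h3 : (d : ℚ) = ∑ m ∈ Finset.Icc 1 d, (m : ℚ) * (Θ.parts.count m : ℚ) := by
      conv_lhs => rw [← Θ.parts_sum]
      rw [h2]
      push_cast
      exact Finset.sum_congr rfl fun m _ => by ring
    rw [h3, Finset.sum_mul]
  calc (d : ℚ) * c d = ∑ Θ : Nat.Partition d, (d : ℚ) * W Θ.parts := by rw [c, Finset.mul_sum]
    _ = ∑ Θ : Nat.Partition d, ∑ k ∈ Finset.Icc 1 d, ((k : ℚ) * (Θ.parts.count k : ℚ)) * W Θ.parts :=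
        Finset.sum_congr rfl fun Θ _ => key Θ
    _ = ∑ k ∈ Finset.Icc 1 d, ∑ Θ : Nat.Partition d, ((k : ℚ) * (Θ.parts.count k : ℚ)) * W Θ.parts :=
        Finset.sum_comm
    _ = ∑ k ∈ Finset.Icc 1 d, (k : ℚ) * ∑ Θ : Nat.Partition d, (Θ.parts.count k : ℚ) * W Θ.parts := by
        refine Finset.sum_congr rfl fun k _ => ?_
        rw [Finset.mul_sum]
        exact Finset.sum_congr rfl fun Θ _ => by ring
    _ = ∑ k ∈ Finset.Icc 1 d, (-1 : ℚ) ^ (k - 1) * c (d - k) := by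
        refine Finset.sum_congr rfl fun k hk => ?_
        obtain ⟨hk1, hk2⟩ := Finset.mem_Icc.1 hk
        rw [count_mul_W_sum hk1 hk2]
        have hkne : (k : ℚ) ≠ 0 := Nat.cast_ne_zero.2 (by omega)
        rw [div_mul_eq_mul_div, ← mul_div_assoc, mul_comm (k : ℚ), mul_div_assoc,
          div_self hkne, mul_one]

lemma c_zero : c 0 = 1 := by
  rw [c, Fintype.sum_unique]
  simp [W]

lemma c_one : c 1 = 1 := by
  rw [c, Fintype.sum_unique]
  have : (default : Nat.Partition 1).parts = {1} := Nat.Partition.partition_one_parts _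
  rw [W, this]
  norm_num

lemma c_eq_zero : ∀ d : ℕ, 2 ≤ d → c d = 0 := by
  intro d
  induction d using Nat.strong_induction_on with
  | _ d IH =>
    intro hd
    obtain ⟨m, rfl⟩ : ∃ m, d = m + 2 := ⟨d - 2, by omega⟩
    have hp := pointing (d := m + 2) (by omega)
    rw [← Finset.Ico_add_one_right_eq_Icc, Finset.sum_Ico_eq_sum_range] at hp
    have hrange : m + 2 + 1 - 1 = m + 2 := by omega
    rw [hrange] at hp
    have hcongr : ∀ i ∈ Finset.range (m + 2),
        (-1 : ℚ) ^ (1 + i - 1) * c (m + 2 - (1 + i)) = (-1 : ℚ) ^ i * c (m + 1 - i) := by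
      intro i _
      congr 2 <;> omega
    rw [Finset.sum_congr rfl hcongr, Finset.sum_range_succ, Finset.sum_range_succ] at hp
    have hzero : ∑ i ∈ Finset.range m, (-1 : ℚ) ^ i * c (m + 1 - i) = 0 := by
      refine Finset.sum_eq_zero fun i hi => ?_
      rw [Finset.mem_range] at hi
      rw [IH (m + 1 - i) (by omega) (by omega), mul_zero]
    have h1 : m + 1 - m = 1 := by omega
    have h2 : m + 1 - (m + 1) = 0 := by omega
    rw [hzero, h1, h2, c_zero, c_one, zero_add] at hp
    have hne : ((m : ℚ) + 2) ≠ 0 := by positivity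
    have : (-1 : ℚ) ^ m * 1 + (-1 : ℚ) ^ (m + 1) * 1 = 0 := by ring
    rw [this] at hp
    push_cast at hp
    exact (mul_eq_zero.1 hp).resolve_left hne

lemma prod_range_eq_toFinset {d : ℕ} (Θ : Nat.Partition d) :
    ∏ j ∈ Finset.range (d + 1), (Nat.factorial (Θ.parts.count j) : ℚ) =
      ∏ j ∈ Θ.parts.toFinset, (Nat.factorial (Θ.parts.count j) : ℚ) := by
  symm
  refine Finset.prod_subset ?_ fun x _ hx => ?_
  · intro m hm
    rw [Multiset.mem_toFinset] at hm
    have := (Multiset.le_sum_of_mem hm).trans_eq Θ.parts_sum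
    exact Finset.mem_range.2 (by omega)
  · rw [Multiset.count_eq_zero_of_notMem (by simpa using hx)]
    simp

lemma W_indiscrete {d : ℕ} (hd : 1 ≤ d) :
    W (Nat.Partition.indiscrete d).parts = (-1 : ℚ) ^ (d - 1) / d := by
  rw [Nat.Partition.indiscrete_parts (by omega), W]
  rw [Multiset.map_singleton, Multiset.prod_singleton, Multiset.toFinset_singleton,
    Finset.prod_singleton, Multiset.count_singleton_self]
  norm_num

end BPUnique

/-- The sequence `n d = (-1)^(d-1)/d^2` is the unique sequence of rationals with `n 1 = 1`
satisfying, for all `d > 1`, the recursion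
`0 = ∑_{Θ partition of d} (∏_i d_i n_{d_i}) / (∏_j ν_j(Θ)!)`. -/
theorem bryan_pandharipande_unique (n : ℕ → ℚ) (h1 : n 1 = 1)
    (hrec : ∀ d : ℕ, 1 < d →
      (0 : ℚ) = ∑ Θ : Nat.Partition d,
        (Θ.parts.map (fun i : ℕ => (i : ℚ) * n i)).prod /
          ∏ j ∈ Finset.range (d + 1), (Nat.factorial (Θ.parts.count j) : ℚ)) :
    ∀ d : ℕ, 1 ≤ d → n d = (-1 : ℚ) ^ (d - 1) / (d : ℚ) ^ 2 := by
  intro d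
  induction d using Nat.strong_induction_on with
  | _ d IH =>
    intro hd
    rcases eq_or_lt_of_le hd with h | hd2
    · rw [← h]; simpa using h1
    have h0 := hrec d hd2
    rw [← Finset.add_sum_erase _ _ (Finset.mem_univ (Nat.Partition.indiscrete d))] at h0
    -- the indiscrete term
    have hind : ((Nat.Partition.indiscrete d).parts.map (fun i : ℕ => (i : ℚ) * n i)).prod /
        ∏ j ∈ Finset.range (d + 1),
          (Nat.factorial ((Nat.Partition.indiscrete d).parts.count j) : ℚ) = (d : ℚ) * n d := by
      rw [Nat.Partition.indiscrete_parts (by omega)]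
      rw [Multiset.map_singleton, Multiset.prod_singleton]
      have : ∏ j ∈ Finset.range (d + 1), (Nat.factorial (({d} : Multiset ℕ).count j) : ℚ) = 1 := by
        refine Finset.prod_eq_one fun j _ => ?_
        rcases eq_or_ne j d with h | h
        · simp [h]
        · simp [Multiset.count_singleton, h]
      rw [this, div_one]
    -- the other terms
    have hother : ∀ Θ ∈ Finset.univ.erase (Nat.Partition.indiscrete d),
        (Θ.parts.map (fun i : ℕ => (i : ℚ) * n i)).prod /
          ∏ j ∈ Finset.range (d + 1), (Nat.factorial (Θ.parts.count j) : ℚ) =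
        BPUnique.W Θ.parts := by
      intro Θ hΘ
      have hne : Θ ≠ Nat.Partition.indiscrete d := Finset.ne_of_mem_erase hΘ
      have hlt : ∀ i ∈ Θ.parts, i < d := by
        intro i hi
        have hle : i ≤ d := (Multiset.le_sum_of_mem hi).trans_eq Θ.parts_sum
        rcases lt_or_eq_of_le hle with h | h
        · exact h
        · exfalso
          subst h
          have hcons := Multiset.cons_erase hi
          have hsum : i + (Θ.parts.erase i).sum = i := by
            conv_rhs => rw [← Θ.parts_sum, ← hcons, Multiset.sum_cons]
          have hzero : (Θ.parts.erase i).sum = 0 := by omega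
          have hempty : Θ.parts.erase i = 0 := by
            refine Multiset.eq_zero_of_forall_notMem fun x hx => ?_
            have hxpos := Θ.parts_pos (Multiset.mem_of_mem_erase hx)
            have := Multiset.sum_eq_zero_iff.1 hzero x hx
            omega
          have hparts : Θ.parts = {i} := by rw [← hcons, hempty]; rfl
          exact hne (Nat.Partition.ext
            (hparts.trans (Nat.Partition.indiscrete_parts (by omega)).symm))
      have hmap : Θ.parts.map (fun i : ℕ => (i : ℚ) * n i) =
          Θ.parts.map (fun i : ℕ => (-1 : ℚ) ^ (i - 1) / i) := by
        refine Multiset.map_congr rfl fun i hi => ?_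
        have h1i : 1 ≤ i := Θ.parts_pos hi
        have := IH i (hlt i hi) h1i
        rw [this]
        have hine : (i : ℚ) ≠ 0 := Nat.cast_ne_zero.2 (by omega)
        field_simp
      rw [hmap, BPUnique.prod_range_eq_toFinset, BPUnique.W]
    rw [hind, Finset.sum_congr rfl hother] at h0
    have hsum : ∑ Θ ∈ Finset.univ.erase (Nat.Partition.indiscrete d), BPUnique.W Θ.parts =
        BPUnique.c d - BPUnique.W (Nat.Partition.indiscrete d).parts := by
      rw [BPUnique.c, ← Finset.add_sum_erase _ _ (Finset.mem_univ (Nat.Partition.indiscrete d))]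
      ring
    rw [hsum, BPUnique.c_eq_zero d (by omega), BPUnique.W_indiscrete hd] at h0
    have hdne : (d : ℚ) ≠ 0 := Nat.cast_ne_zero.2 (by omega)
    field_simp at h0 ⊢
    linarith [h0]
end

section
/- In the quotient ring R = \mathbb{Q}[y1, y2, Y1, Y2]/(y1 Y1 - 1, y2 Y2 - 1, y1 - Y1 Y2, y2 - Y1 Y2), the element w = y1 + y2 + Y1 Y2 satisfies (w - 3)(w^2 + 3w + 9) = 0, and this is the minimal polynomial relation: the kernel of the map \mathbb{Q}[z] \to R sending z to w is the ideal generated by (z-3)(z^2+3z+9) = z^3 - 27. -/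
/-!
In `R` the relations give `y₁ = y₂ = Y₁Y₂ =: t` and `t³ = y₁Y₁ · y₂Y₂ = 1`, so `w = 3t` and `w³ = 27`.
Conversely `y₁, y₂ ↦ t`, `Y₁, Y₂ ↦ t²` defines a map from `R` to any `ℚ`-algebra containing a cube
root of unity `t`; taking `t = r/3` for the root `r` of `z³ - 27` in `ℚ[z]/(z³ - 27)` sends `w` to
`r`, so every polynomial killing `w` is divisible by `z³ - 27`.
-/

open MvPolynomial

/-- The ideal of relations for the Jacobian ring of the Hori–Vafa potential of `ℙ²`:
variables `X 0 = y₁`, `X 1 = y₂`, `X 2 = Y₁`, `X 3 = Y₂`, with relations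
`y₁Y₁ = 1`, `y₂Y₂ = 1`, `y₁ = Y₁Y₂`, `y₂ = Y₁Y₂`. -/
noncomputable def jacIdealP2 : Ideal (MvPolynomial (Fin 4) ℚ) :=
  Ideal.span {X 0 * X 2 - 1, X 1 * X 3 - 1, X 0 - X 2 * X 3, X 1 - X 2 * X 3}

/-- The class of `w = y₁ + y₂ + Y₁Y₂` in the Jacobian ring. -/
noncomputable def wP2 : MvPolynomial (Fin 4) ℚ ⧸ jacIdealP2 :=
  Ideal.Quotient.mk jacIdealP2 (X 0 + X 1 + X 2 * X 3)

theorem Polynomial.ker_aeval_eq_span_of_algHom_adjoinRoot {R A : Type*} [CommRing R] [CommRing A]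
    [Algebra R A] {f : Polynomial R} {a : A} (hf : Polynomial.aeval a f = 0)
    (φ : A →ₐ[R] AdjoinRoot f) (hφ : φ a = AdjoinRoot.root f) :
    RingHom.ker (Polynomial.aeval a).toRingHom = Ideal.span {f} := by
  refine le_antisymm (fun p hp => ?_) (Ideal.span_le.2 ?_)
  · have hp : Polynomial.aeval a p = 0 := hp
    rw [Ideal.mem_span_singleton, ← AdjoinRoot.mk_eq_zero, ← AdjoinRoot.aeval_eq, ← hφ,
      Polynomial.aeval_algHom_apply, hp, map_zero]
  · rintro _ rfl
    exact hf

theorem pow_three_eq_of_jacobian_relations {A : Type*} [CommRing A] {y₁ y₂ Y₁ Y₂ : A}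
    (h₁ : y₁ * Y₁ = 1) (h₂ : y₂ * Y₂ = 1) (h₃ : y₁ = Y₁ * Y₂) (h₄ : y₂ = Y₁ * Y₂) :
    (y₁ + y₂ + Y₁ * Y₂) ^ 3 = 27 := by
  subst h₃ h₄
  linear_combination 27 * (Y₁ * Y₂ ^ 2) * h₁ + 27 * h₂

theorem wP2_pow_three : wP2 ^ 3 = 27 := by
  simp only [wP2, map_add, map_mul]
  apply pow_three_eq_of_jacobian_relations
  all_goals
    rw [← map_mul]
    try rw [← map_one (Ideal.Quotient.mk jacIdealP2)]
    exact Ideal.Quotient.eq.2 (Ideal.subset_span (by simp))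

theorem exists_mul_three_eq_of_pow_three_eq {A : Type*} [CommRing A] [Algebra ℚ A] {r : A}
    (hr : r ^ 3 = 27) : ∃ t : A, t ^ 3 = 1 ∧ 3 * t = r := by
  set c := algebraMap ℚ A 3⁻¹
  have hc : 3 * c = 1 := by
    rw [← map_ofNat (algebraMap ℚ A) 3, ← map_mul]
    norm_num
  exact ⟨c * r, by linear_combination c ^ 3 * hr + (9 * c ^ 2 + 3 * c + 1) * hc,
    by linear_combination r * hc⟩

noncomputable def jacP2Lift {A : Type*} [CommRing A] [Algebra ℚ A] (t : A) (ht : t ^ 3 = 1) :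
    MvPolynomial (Fin 4) ℚ ⧸ jacIdealP2 →ₐ[ℚ] A :=
  Ideal.Quotient.liftₐ jacIdealP2 (aeval ![t, t, t ^ 2, t ^ 2]) fun _ hp =>
    (RingHom.mem_ker).1 <| Ideal.span_le.2 (by
      rintro _ (rfl | rfl | rfl | rfl) <;>
        simp only [SetLike.mem_coe, RingHom.mem_ker, map_sub, map_mul, map_one, aeval_X] <;>
        simp only [Matrix.cons_val] <;>
        first | linear_combination ht | linear_combination (-t) * ht) hp

theorem jacP2Lift_wP2 {A : Type*} [CommRing A] [Algebra ℚ A] (t : A) (ht : t ^ 3 = 1) :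
    jacP2Lift t ht wP2 = 3 * t := by
  change aeval ![t, t, t ^ 2, t ^ 2] (X 0 + X 1 + X 2 * X 3) = 3 * t
  simp only [map_add, map_mul, aeval_X, Matrix.cons_val]
  linear_combination t * ht

/-- In the Jacobian ring `R = ℚ[y₁,y₂,Y₁,Y₂]/(y₁Y₁-1, y₂Y₂-1, y₁-Y₁Y₂, y₂-Y₁Y₂)`,
the element `w = y₁ + y₂ + Y₁Y₂` satisfies `(w-3)(w²+3w+9) = 0`, and the kernel of
the evaluation `ℚ[z] → R`, `z ↦ w`, is generated by `(z-3)(z²+3z+9)`. -/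
theorem minimal_relation_P2 :
    (wP2 - 3) * (wP2 ^ 2 + 3 * wP2 + 9) = 0 ∧
    RingHom.ker ((Polynomial.aeval wP2 :
        Polynomial ℚ →ₐ[ℚ] MvPolynomial (Fin 4) ℚ ⧸ jacIdealP2).toRingHom) =
      Ideal.span {(Polynomial.X - 3) * (Polynomial.X ^ 2 + 3 * Polynomial.X + 9)} := by
  have hw : (wP2 - 3) * (wP2 ^ 2 + 3 * wP2 + 9) = 0 := by linear_combination wP2_pow_three
  refine ⟨hw, ?_⟩
  set f : Polynomial ℚ := (Polynomial.X - 3) * (Polynomial.X ^ 2 + 3 * Polynomial.X + 9)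
  have hf : ∀ {A : Type} [CommRing A] [Algebra ℚ A] (a : A),
      Polynomial.aeval a f = (a - 3) * (a ^ 2 + 3 * a + 9) := fun a => by
    simp only [f, map_mul, map_add, map_sub, map_pow, Polynomial.aeval_X, map_ofNat]
  have hr : AdjoinRoot.root f ^ 3 = 27 := by
    have hroot := AdjoinRoot.aeval_eq (f := f) f
    rw [AdjoinRoot.mk_self, hf] at hroot
    linear_combination hroot
  obtain ⟨t, ht, h3t⟩ := exists_mul_three_eq_of_pow_three_eq hr
  exact Polynomial.ker_aeval_eq_span_of_algHom_adjoinRoot ((hf wP2).trans hw) (jacP2Lift t ht)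
    ((jacP2Lift_wP2 t ht).trans h3t)
end

section
/- For the Laurent polynomial W(y1,y2) = 1/y1 + y1 y2 + 2 y1^2 + y1^3/y2 (the potential of the Chekanov torus in \P^2), the critical values of W on (\mathbb{C}^\times)^2 are the complex numbers c with c^3 = 27, i.e., the set of critical values is {3, 3\omega, 3\omega^2} where \omega = e^{2\pi i/3}. -/
private lemma derivW1 (y2 y1 : ℂ) (hy1 : y1 ≠ 0) :
    deriv (fun t : ℂ => t⁻¹ + t * y2 + 2 * t ^ 2 + t ^ 3 * y2⁻¹) y1
      = -(y1 ^ 2)⁻¹ + y2 + 4 * y1 + 3 * y1 ^ 2 * y2⁻¹ := by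
  have h : HasDerivAt (fun t : ℂ => t⁻¹ + t * y2 + 2 * t ^ 2 + t ^ 3 * y2⁻¹)
      (-(y1 ^ 2)⁻¹ + y2 + 4 * y1 + 3 * y1 ^ 2 * y2⁻¹) y1 := by
    have h1 := hasDerivAt_inv hy1
    have h2 := (hasDerivAt_id y1).mul_const y2
    have h3 := (hasDerivAt_pow 2 y1).const_mul (2 : ℂ)
    have h4 := (hasDerivAt_pow 3 y1).mul_const (y2⁻¹)
    have := ((h1.add h2).add h3).add h4
    refine HasDerivAt.congr_deriv this ?_
    push_cast
    ring
  exact h.deriv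

private lemma derivW2 (y1 y2 : ℂ) (hy2 : y2 ≠ 0) :
    deriv (fun t : ℂ => y1⁻¹ + y1 * t + 2 * y1 ^ 2 + y1 ^ 3 * t⁻¹) y2
      = y1 - y1 ^ 3 * (y2 ^ 2)⁻¹ := by
  have h : HasDerivAt (fun t : ℂ => y1⁻¹ + y1 * t + 2 * y1 ^ 2 + y1 ^ 3 * t⁻¹)
      (y1 - y1 ^ 3 * (y2 ^ 2)⁻¹) y2 := by
    have h1 := (hasDerivAt_id y2).const_mul y1
    have h4 := (hasDerivAt_inv hy2).const_mul (y1 ^ 3)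
    have := (((hasDerivAt_const y2 (y1⁻¹)).add h1).add
      (hasDerivAt_const y2 (2 * y1 ^ 2))).add h4
    refine HasDerivAt.congr_deriv this ?_
    ring
  exact h.deriv

/-- For the Laurent polynomial `W(y₁,y₂) = 1/y₁ + y₁y₂ + 2y₁² + y₁³/y₂`
(the potential of the Chekanov torus in `ℙ²`), the set of critical values on `(ℂ^×)²`
is exactly the set of complex numbers `c` with `c³ = 27`. -/
theorem critical_values_Chekanov :
    {c : ℂ | ∃ y1 y2 : ℂ, y1 ≠ 0 ∧ y2 ≠ 0 ∧
        y1 * deriv (fun t : ℂ => t⁻¹ + t * y2 + 2 * t ^ 2 + t ^ 3 * y2⁻¹) y1 = 0 ∧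
        y2 * deriv (fun t : ℂ => y1⁻¹ + y1 * t + 2 * y1 ^ 2 + y1 ^ 3 * t⁻¹) y2 = 0 ∧
        y1⁻¹ + y1 * y2 + 2 * y1 ^ 2 + y1 ^ 3 * y2⁻¹ = c}
      = {c : ℂ | c ^ 3 = 27} := by
  ext c
  simp only [Set.mem_setOf_eq]
  constructor
  · rintro ⟨y1, y2, hy1, hy2, h1, h2, hc⟩
    rw [derivW1 y2 y1 hy1] at h1
    rw [derivW2 y1 y2 hy2] at h2
    replace h1 := (mul_eq_zero.mp h1).resolve_left hy1
    replace h2 := (mul_eq_zero.mp h2).resolve_left hy2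
    -- polynomial forms
    have p2 : y1 * y2 ^ 2 - y1 ^ 3 = 0 := by
      have e : y2 ^ 2 * (y1 - y1 ^ 3 * (y2 ^ 2)⁻¹) = y1 * y2 ^ 2 - y1 ^ 3 := by
        field_simp
      rw [← e, h2, mul_zero]
    have p1 : -y2 + y1 ^ 2 * y2 ^ 2 + 4 * y1 ^ 3 * y2 + 3 * y1 ^ 4 = 0 := by
      have e : y1 ^ 2 * y2 * (-(y1 ^ 2)⁻¹ + y2 + 4 * y1 + 3 * y1 ^ 2 * y2⁻¹)
          = -y2 + y1 ^ 2 * y2 ^ 2 + 4 * y1 ^ 3 * y2 + 3 * y1 ^ 4 := by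
        field_simp
      rw [← e, h1, mul_zero]
    have pc : y2 + y1 ^ 2 * y2 ^ 2 + 2 * y1 ^ 3 * y2 + y1 ^ 4 = c * y1 * y2 := by
      have e : y1 * y2 * (y1⁻¹ + y1 * y2 + 2 * y1 ^ 2 + y1 ^ 3 * y2⁻¹)
          = y2 + y1 ^ 2 * y2 ^ 2 + 2 * y1 ^ 3 * y2 + y1 ^ 4 := by
        field_simp
      rw [← e, hc]
      ring
    have hcase : y2 = y1 ∨ y2 = -y1 := by
      have h0 : y1 * ((y2 - y1) * (y2 + y1)) = 0 := by linear_combination p2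
      rcases mul_eq_zero.mp ((mul_eq_zero.mp h0).resolve_left hy1) with h | h
      · left; linear_combination h
      · right; linear_combination h
    rcases hcase with rfl | h
    · -- y2 = y1 case (y1 got renamed to y2 by substitution)
      have h8 : 8 * y2 ^ 3 = 1 := by
        have h0 : y2 * (8 * y2 ^ 3 - 1) = 0 := by linear_combination p1
        have := (mul_eq_zero.mp h0).resolve_left hy2
        linear_combination this
      have hcy : c * y2 = 3 / 2 := by
        have h0 : y2 ^ 2 * (c * y2 - 3 / 2) = 0 := by
          linear_combination (-y2) * pc + (y2 ^ 2 / 2) * h8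
        have := (mul_eq_zero.mp h0).resolve_left (pow_ne_zero 2 hy2)
        linear_combination this
      linear_combination (-c ^ 3) * h8 + 8 * (c ^ 2 * y2 ^ 2 + (3 / 2) * c * y2 + 9 / 4) * hcy
    · -- y2 = -y1 : contradiction
      exfalso
      exact hy1 (by linear_combination p1 + (1 - y1 ^ 2 * (y2 + 3 * y1)) * h)
  · intro hc3
    have hc : c ≠ 0 := by
      intro h
      rw [h] at hc3
      norm_num at hc3
    obtain ⟨y, hy, h8, hcy⟩ : ∃ y : ℂ, y ≠ 0 ∧ 8 * y ^ 3 = 1 ∧ c * y = 3 / 2 := by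
      refine ⟨3 / (2 * c), div_ne_zero (by norm_num) (mul_ne_zero two_ne_zero hc), ?_, ?_⟩
      · field_simp
        linear_combination (-8 : ℂ) * hc3
      · field_simp
    refine ⟨y, y, hy, hy, ?_, ?_, ?_⟩
    · rw [derivW1 y y hy]
      have e : y * (-(y ^ 2)⁻¹ + y + 4 * y + 3 * y ^ 2 * y⁻¹) = y⁻¹ * (8 * y ^ 3 - 1) := by
        field_simp
        ring
      rw [e, h8]
      ring
    · rw [derivW2 y y hy]
      have e : y * (y - y ^ 3 * (y ^ 2)⁻¹) = 0 := by
        field_simp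
        ring
      exact e
    · have e : y⁻¹ + y * y + 2 * y ^ 2 + y ^ 3 * y⁻¹ = y⁻¹ * (1 + 4 * y ^ 3) := by
        field_simp
        ring
      rw [e]
      have h4 : 1 + 4 * y ^ 3 = 3 / 2 := by linear_combination h8 / 2
      rw [h4]
      have : y⁻¹ = (2 / 3) * c := by
        field_simp
        linear_combination (-2 : ℂ) * hcy
      rw [this]
      ring
end

section
/- Let \Delta \subset \mathbb{R}^2 be a convex polytope all of whose facets are of the form F_\mu = \{x : \langle x, \mu \rangle = 1\} for primitive \mu \in \mathbb{Z}^2, with 0 in the interior of \Delta, and let \Delta^\vee be the convex hull of these primitive normals. Then there is a constant C > 1 such that for every \xi \in \mathbb{Z}^2 \setminus \Delta^\vee, the constant c_\xi defined by the condition that the line \{\langle x, \xi \rangle = c_\xi\} is a supporting line of \Delta (i.e., meets \Delta and \Delta is contained in \{\langle x, \xi \rangle \le c_\xi\}) satisfies c_\xi \ge C. -/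
/-!
`Δ` is the polar `{x | ⟨x, μ⟩ ≤ 1 for all normals μ}` of `Δ^∨`. If `ξ ∉ Δ^∨`, a linear functional
`⟨·, v⟩` separates them: `⟨μ, v⟩ < u < ⟨ξ, v⟩` for all normals `μ`. Boundedness of `Δ` forces
`u > 0` (otherwise the ray `ℝ≥0 v` lies in `Δ`), so `u⁻¹ v ∈ Δ` and `c_ξ ≥ ⟨u⁻¹ v, ξ⟩ > 1`.
Since `Δ` contains a ball around `0`, `c_ξ` grows linearly in `‖ξ‖`, so only finitely many
lattice points `ξ` have `c_ξ < 2`, and `C` is the minimum of `2` and their values.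
-/

open Set Metric Bornology

namespace PolarPolygon

def dot (x y : ℝ × ℝ) : ℝ := x.1 * y.1 + x.2 * y.2

lemma dot_smul_left (t : ℝ) (x y : ℝ × ℝ) : dot (t • x) y = t * dot x y := by
  simp only [dot, Prod.smul_fst, Prod.smul_snd, smul_eq_mul]; ring

lemma dot_zero_left (y : ℝ × ℝ) : dot 0 y = 0 := by
  simp [dot]

lemma continuous_dot_left (y : ℝ × ℝ) : Continuous fun x => dot x y := by
  unfold dot; fun_prop

lemma apply_eq_dot (f : ℝ × ℝ →L[ℝ] ℝ) (x : ℝ × ℝ) : f x = dot (f (1, 0), f (0, 1)) x := by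
  have hx : x = x.1 • ((1 : ℝ), (0 : ℝ)) + x.2 • ((0 : ℝ), (1 : ℝ)) := by simp
  conv_lhs => rw [hx]
  simp only [map_add, map_smul, smul_eq_mul, dot]; ring

def polar (S : Set (ℝ × ℝ)) : Set (ℝ × ℝ) := {x | ∀ μ ∈ S, dot x μ ≤ 1}

lemma eq_zero_of_forall_dot_nonpos {S : Set (ℝ × ℝ)} (hb : IsBounded (polar S)) {v : ℝ × ℝ}
    (hv : ∀ μ ∈ S, dot v μ ≤ 0) : v = 0 := by
  obtain ⟨R, hR⟩ := isBounded_iff_forall_norm_le.mp hb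
  have hray : ∀ t : ℝ, 0 ≤ t → t • v ∈ polar S := fun t ht μ hμ => by
    rw [dot_smul_left]
    nlinarith [hv μ hμ]
  by_contra hv0
  have hv0 : 0 < ‖v‖ := norm_pos_iff.mpr hv0
  have hfar := hR _ (hray ((|R| + 1) / ‖v‖) (by positivity))
  rw [norm_smul, Real.norm_of_nonneg (by positivity), div_mul_cancel₀ _ hv0.ne'] at hfar
  linarith [le_abs_self R]

lemma exists_one_lt_dot_of_notMem_convexHull {S : Set (ℝ × ℝ)} (hfin : S.Finite)
    (hne : S.Nonempty) (hb : IsBounded (polar S)) {ξ : ℝ × ℝ} (hξ : ξ ∉ convexHull ℝ S) :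
    ∃ x ∈ polar S, 1 < dot x ξ := by
  obtain ⟨f, u, hfu, huξ⟩ :=
    geometric_hahn_banach_closed_point (convex_convexHull ℝ S)
      (hfin.isCompact_convexHull ℝ).isClosed hξ
  set v : ℝ × ℝ := (f (1, 0), f (0, 1))
  have hf : ∀ y, f y = dot v y := apply_eq_dot f
  have hvS : ∀ μ ∈ S, dot v μ < u := fun μ hμ => hf μ ▸ hfu μ (subset_convexHull ℝ S hμ)
  have hu : 0 < u := by
    by_contra! hu
    obtain ⟨μ₀, hμ₀⟩ := hne
    have hv : v = 0 := eq_zero_of_forall_dot_nonpos hb fun μ hμ => (hvS μ hμ).le.trans hu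
    have hμ₀u := hvS μ₀ hμ₀
    rw [hv, dot_zero_left] at hμ₀u
    linarith
  refine ⟨u⁻¹ • v, fun μ hμ => ?_, ?_⟩
  · rw [dot_smul_left, inv_mul_le_iff₀ hu, mul_one]
    exact (hvS μ hμ).le
  · rw [dot_smul_left, lt_inv_mul_iff₀ hu, mul_one, ← hf]
    exact huξ

noncomputable def supportValue (Δ : Set (ℝ × ℝ)) (ξ : ℝ × ℝ) : ℝ := sSup ((fun x => dot x ξ) '' Δ)

lemma dot_le_supportValue {Δ : Set (ℝ × ℝ)} (hΔ : IsCompact Δ) {x : ℝ × ℝ} (hx : x ∈ Δ)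
    (ξ : ℝ × ℝ) : dot x ξ ≤ supportValue Δ ξ :=
  le_csSup (hΔ.image (continuous_dot_left ξ)).bddAbove (mem_image_of_mem _ hx)

lemma abs_sign_le_one {α : Type*} [Ring α] [LinearOrder α] [IsStrictOrderedRing α] (a : α) :
    |(SignType.sign a : α)| ≤ 1 := by
  rcases lt_trichotomy a 0 with h | h | h <;> simp [h]

lemma mul_norm_le_supportValue {Δ : Set (ℝ × ℝ)} (hΔ : IsCompact Δ) {r : ℝ} (hr : 0 ≤ r)
    (hball : closedBall 0 r ⊆ Δ) (ξ : ℝ × ℝ) : r * ‖ξ‖ ≤ supportValue Δ ξ := by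
  set e : ℝ × ℝ := ((SignType.sign ξ.1 : ℝ), (SignType.sign ξ.2 : ℝ))
  have he : ‖e‖ ≤ 1 := by
    rw [Prod.norm_def, Real.norm_eq_abs, Real.norm_eq_abs]
    exact max_le (abs_sign_le_one _) (abs_sign_le_one _)
  have hre : r • e ∈ Δ := hball <| by
    rw [mem_closedBall_zero_iff, norm_smul, Real.norm_of_nonneg hr]
    exact mul_le_of_le_one_right hr he
  have hnorm : ‖ξ‖ ≤ |ξ.1| + |ξ.2| := by
    rw [Prod.norm_def, Real.norm_eq_abs, Real.norm_eq_abs]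
    exact max_le (le_add_of_nonneg_right (abs_nonneg _)) (le_add_of_nonneg_left (abs_nonneg _))
  calc r * ‖ξ‖ ≤ r * (|ξ.1| + |ξ.2|) := by gcongr
    _ = dot (r • e) ξ := by rw [dot_smul_left]; simp only [dot, e, sign_mul_self]
    _ ≤ supportValue Δ ξ := dot_le_supportValue hΔ hre ξ

lemma finite_latticePoints_of_isBounded {B : Set (ℝ × ℝ)} (hB : IsBounded B) :
    {ξ : ℤ × ℤ | ((ξ.1 : ℝ), (ξ.2 : ℝ)) ∈ B}.Finite := by
  obtain ⟨R, hR⟩ := isBounded_iff_forall_norm_le.mp hB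
  refine (isCompact_closedBall (0 : ℤ × ℤ) R).finite_of_discrete.subset fun ξ hξ => ?_
  have hξR := hR _ hξ
  rwa [Prod.norm_def, Int.norm_cast_real, Int.norm_cast_real, ← Prod.norm_def,
    ← mem_closedBall_zero_iff] at hξR

lemma exists_gt_forall_le_of_finite_sublevel {α β : Type*} [LinearOrder β] {T : Set α}
    {g : α → β} {a b : β} (hab : a < b) (hT : ∀ ξ ∈ T, a < g ξ)
    (hfin : {ξ ∈ T | g ξ < b}.Finite) : ∃ C, a < C ∧ ∀ ξ ∈ T, C ≤ g ξ := by
  classical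
  set F := insert b (hfin.toFinset.image g)
  have hF : F.Nonempty := Finset.insert_nonempty _ _
  refine ⟨F.min' hF, (F.lt_min'_iff hF).2 fun y hy => ?_, fun ξ hξ => ?_⟩
  · rcases Finset.mem_insert.1 hy with rfl | hy
    · exact hab
    · obtain ⟨ξ, hξ, rfl⟩ := Finset.mem_image.1 hy
      exact hT ξ (hfin.mem_toFinset.1 hξ).1
  · by_cases hlt : g ξ < b
    · exact F.min'_le _ (Finset.mem_insert_of_mem
        (Finset.mem_image_of_mem g (hfin.mem_toFinset.2 ⟨hξ, hlt⟩)))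
    · exact (F.min'_le _ (Finset.mem_insert_self _ _)).trans (not_lt.1 hlt)

end PolarPolygon

open PolarPolygon

theorem support_value_lower_bound_general (s : Finset (ℤ × ℤ)) (hne : s.Nonempty)
    (Δ : Set (ℝ × ℝ))
    (hΔ : Δ = {x : ℝ × ℝ | ∀ μ ∈ s, x.1 * (μ.1 : ℝ) + x.2 * (μ.2 : ℝ) ≤ 1})
    (hcomp : IsCompact Δ)
    (h0 : ((0 : ℝ), (0 : ℝ)) ∈ interior Δ) :
    ∃ C : ℝ, 1 < C ∧ ∀ ξ : ℤ × ℤ,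
      ((ξ.1 : ℝ), (ξ.2 : ℝ)) ∉
          convexHull ℝ ((s.image fun μ : ℤ × ℤ => ((μ.1 : ℝ), (μ.2 : ℝ)) :
            Finset (ℝ × ℝ)) : Set (ℝ × ℝ)) →
      C ≤ sSup ((fun x : ℝ × ℝ => x.1 * (ξ.1 : ℝ) + x.2 * (ξ.2 : ℝ)) '' Δ) := by
  set S : Finset (ℝ × ℝ) := s.image fun μ : ℤ × ℤ => ((μ.1 : ℝ), (μ.2 : ℝ))
  have hΔS : Δ = polar S := by
    rw [hΔ]; ext x
    simp only [polar, dot, S, Finset.coe_image, Set.forall_mem_image, Finset.mem_coe]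
  obtain ⟨r, hr, hball⟩ := nhds_basis_closedBall.mem_iff.mp (mem_interior_iff_mem_nhds.mp h0)
  have hone_lt : ∀ ξ : ℝ × ℝ, ξ ∉ convexHull ℝ (S : Set (ℝ × ℝ)) → 1 < supportValue Δ ξ := by
    intro ξ hξ
    obtain ⟨x, hx, hlt⟩ := exists_one_lt_dot_of_notMem_convexHull S.finite_toSet
      (Finset.coe_nonempty.2 (hne.image _)) (hΔS ▸ hcomp.isBounded) hξ
    exact hlt.trans_le (dot_le_supportValue hcomp (hΔS ▸ hx) ξ)
  have hsublevel : {ξ : ℤ × ℤ | ((ξ.1 : ℝ), (ξ.2 : ℝ)) ∉ convexHull ℝ (S : Set (ℝ × ℝ)) ∧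
      supportValue Δ ((ξ.1 : ℝ), (ξ.2 : ℝ)) < 2}.Finite := by
    refine (finite_latticePoints_of_isBounded (isBounded_closedBall (x := 0) (r := 2 / r))).subset
      fun ξ hξ => ?_
    show ((ξ.1 : ℝ), (ξ.2 : ℝ)) ∈ closedBall 0 (2 / r)
    rw [mem_closedBall_zero_iff, le_div_iff₀ hr, mul_comm]
    exact (mul_norm_le_supportValue hcomp hr.le hball _).trans hξ.2.le
  exact exists_gt_forall_le_of_finite_sublevel one_lt_two (fun ξ hξ => hone_lt _ hξ) hsublevel

/-- Let `Δ ⊂ ℝ²` be a compact convex polygon cut out by half-spaces `⟨x, μ⟩ ≤ 1` for a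
finite set of primitive integer normals `μ`, with `0` in the interior, each line
`{⟨x, μ⟩ = 1}` meeting `Δ` (so each is a facet), and let `Δ^∨` be the convex hull of the
normals. Then there is a constant `C > 1` such that for every lattice vector
`ξ ∈ ℤ² \ Δ^∨`, the value `c_ξ = max_{x ∈ Δ} ⟨x, ξ⟩` satisfies `c_ξ ≥ C`. -/
theorem support_value_lower_bound (s : Finset (ℤ × ℤ)) (hne : s.Nonempty)
    (hprim : ∀ μ ∈ s, Int.gcd μ.1 μ.2 = 1)
    (Δ : Set (ℝ × ℝ))
    (hΔ : Δ = {x : ℝ × ℝ | ∀ μ ∈ s, x.1 * (μ.1 : ℝ) + x.2 * (μ.2 : ℝ) ≤ 1})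
    (hcomp : IsCompact Δ)
    (h0 : ((0 : ℝ), (0 : ℝ)) ∈ interior Δ)
    (hfacet : ∀ μ ∈ s, ∃ x ∈ Δ, x.1 * (μ.1 : ℝ) + x.2 * (μ.2 : ℝ) = 1) :
    ∃ C : ℝ, 1 < C ∧ ∀ ξ : ℤ × ℤ,
      ((ξ.1 : ℝ), (ξ.2 : ℝ)) ∉
          convexHull ℝ ((s.image fun μ : ℤ × ℤ => ((μ.1 : ℝ), (μ.2 : ℝ)) :
            Finset (ℝ × ℝ)) : Set (ℝ × ℝ)) →
      C ≤ sSup ((fun x : ℝ × ℝ => x.1 * (ξ.1 : ℝ) + x.2 * (ξ.2 : ℝ)) '' Δ) :=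
  support_value_lower_bound_general s hne Δ hΔ hcomp h0
end

section
/- The number of pairs (z1, z2) \in (\mathbb{C}^\times)^2 satisfying z1^{T1} = z2^{T2} as elements of (\mathbb{C}^\times)^2, for two nonzero non-parallel vectors T1, T2 \in \mathbb{Z}^2 (where z^{(a,b)} := (z^a, z^b)), is exactly |det(T1, T2)|; consequently the number of distinct common values g = z1^{T1} = z2^{T2} is |det(T1,T2)|/(\ell(T1) \ell(T2)) where \ell(T) is the gcd of the coordinates of T. -/
/-!
The pairs `(z₁, z₂)` with `z₁^{T₁} = z₂^{T₂}` form the kernel of the endomorphism of the torus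
`(ℂ^×)²` with integer matrix `(T₁ | -T₂)`. Integer column operations are automorphisms of the
torus, so running the Euclidean algorithm on the first row does not change the size of the
kernel and reduces to a triangular matrix `(a, 0; c, d)`, whose kernel has `|a| |d|` elements:
`|a|` choices of `z₁`, each with `|d|` roots `z₂`.

The common values are the image of this finite group under `(z₁, z₂) ↦ z₁^{T₁}`, whose kernel on
it is `μ_{ℓ(T₁)} × μ_{ℓ(T₂)}`, because `z^{(a,b)} = 1` if and only if `z^{gcd(a,b)} = 1`.
-/

/-- For `T = (a,b) ∈ ℤ²` and `z ∈ ℂ`, the pair `z^T = (z^a, z^b)`. -/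
noncomputable def zpowVec (z : ℂ) (T : ℤ × ℤ) : ℂ × ℂ := (z ^ T.1, z ^ T.2)

namespace Subgroup

variable {G N : Type*} [Group G] [Group N]

theorem card_eq_card_map_mul_card_inf_ker (K : Subgroup G) (f : G →* N) :
    Nat.card K = Nat.card (K.map f) * Nat.card ↥(K ⊓ f.ker) := by
  rw [(f.domRestrict K).ker.card_eq_card_quotient_mul_card_subgroup,
    Nat.card_congr (QuotientGroup.quotientKerEquivRange _).toEquiv, MonoidHom.domRestrict_range,
    MonoidHom.ker_domRestrict, ← inf_subgroupOf_left,
    Nat.card_congr (subgroupOfEquivOfLe inf_le_left).toEquiv]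

theorem card_prod (H : Subgroup G) (K : Subgroup N) :
    Nat.card (H.prod K) = Nat.card H * Nat.card K := by
  rw [Nat.card_congr (H.prodEquiv K).toEquiv, Nat.card_prod]

end Subgroup

theorem MonoidHom.card_ker_comp_mulEquiv {G G' N : Type*} [Group G] [Group G'] [Group N]
    (f : G →* N) (e : G' ≃* G) : Nat.card (f.comp (e : G' →* G)).ker = Nat.card f.ker := by
  rw [ker_comp_mulEquiv, Subgroup.card_map_of_injective e.symm.injective]

theorem ker_zpowGroupHom {G : Type*} [CommGroup G] (n : ℤ) :
    (zpowGroupHom n : G →* G).ker = (powMonoidHom n.natAbs).ker := by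
  ext x
  simp [pow_natAbs_eq_one]

namespace IsAlgClosed

variable {F : Type*} [Field F] [IsAlgClosed F]

theorem units_pow_surjective {m : ℕ} (hm : m ≠ 0) : Function.Surjective fun x : Fˣ ↦ x ^ m := by
  intro t
  obtain ⟨z, hz⟩ := exists_pow_nat_eq (t : F) (Nat.pos_of_ne_zero hm)
  exact ⟨Units.mk0 z (ne_zero_pow hm (hz ▸ t.ne_zero)), Units.ext (by simpa using hz)⟩

theorem units_zpow_surjective {n : ℤ} (hn : n ≠ 0) : Function.Surjective fun x : Fˣ ↦ x ^ n := by
  intro t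
  have hm : n.natAbs ≠ 0 := Int.natAbs_ne_zero.mpr hn
  rcases Int.natAbs_eq n with h | h
  · obtain ⟨x, hx : x ^ n.natAbs = t⟩ := units_pow_surjective hm t
    exact ⟨x, show x ^ n = t by rw [h, zpow_natCast, hx]⟩
  · obtain ⟨x, hx : x ^ n.natAbs = t⁻¹⟩ := units_pow_surjective hm t⁻¹
    exact ⟨x, show x ^ n = t by rw [h, zpow_neg, zpow_natCast, hx, inv_inv]⟩

variable [CharZero F]

theorem card_ker_powMonoidHom {m : ℕ} (hm : m ≠ 0) :
    Nat.card (powMonoidHom m : Fˣ →* Fˣ).ker = m := by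
  have : NeZero m := ⟨hm⟩
  rw [← rootsOfUnity_eq_ker, HasEnoughRootsOfUnity.natCard_rootsOfUnity]

theorem card_ker_zpowGroupHom {n : ℤ} (hn : n ≠ 0) :
    Nat.card (zpowGroupHom n : Fˣ →* Fˣ).ker = n.natAbs := by
  rw [ker_zpowGroupHom, card_ker_powMonoidHom (Int.natAbs_ne_zero.mpr hn)]

end IsAlgClosed

namespace Torus

section CommGroup

variable {G : Type*} [CommGroup G]

def monomialHom (a b c d : ℤ) : G × G →* G × G :=
  ((zpowGroupHom a).coprod (zpowGroupHom b)).prod ((zpowGroupHom c).coprod (zpowGroupHom d))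

@[simp]
theorem monomialHom_apply (a b c d : ℤ) (p : G × G) :
    monomialHom a b c d p = (p.1 ^ a * p.2 ^ b, p.1 ^ c * p.2 ^ d) :=
  rfl

theorem monomialHom_comp_prodComm (a b c d : ℤ) :
    (monomialHom a b c d : G × G →* G × G).comp (MulEquiv.prodComm : G × G ≃* G × G) =
      monomialHom b a d c := by
  ext p <;> simp [mul_comm]

def shear (q : ℤ) : G × G ≃* G × G where
  toFun p := (p.1 * p.2 ^ q, p.2)
  invFun p := (p.1 / p.2 ^ q, p.2)
  left_inv p := by simp
  right_inv p := by simp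
  map_mul' p p' := by simp [mul_zpow, mul_mul_mul_comm]

theorem monomialHom_comp_shear (a b c d q : ℤ) :
    (monomialHom a b c d : G × G →* G × G).comp (shear q : G × G ≃* G × G) =
      monomialHom a (b + q * a) c (d + q * c) := by
  ext p <;> simp [shear, mul_zpow, ← zpow_mul, zpow_add, mul_comm, mul_left_comm]

def zpowVecHom (T : ℤ × ℤ) : G →* G × G :=
  (zpowGroupHom T.1).prod (zpowGroupHom T.2)

theorem ker_zpowVecHom (T : ℤ × ℤ) :
    (zpowVecHom T : G →* G × G).ker = (powMonoidHom (Int.gcd T.1 T.2)).ker := by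
  ext x
  simp [zpowVecHom, Prod.ext_iff]

def zpowVecEqLocus (T₁ T₂ : ℤ × ℤ) : Subgroup (G × G) :=
  ((zpowVecHom T₁).comp (MonoidHom.fst G G)).eqLocus ((zpowVecHom T₂).comp (MonoidHom.snd G G))

theorem mem_zpowVecEqLocus {T₁ T₂ : ℤ × ℤ} {p : G × G} :
    p ∈ zpowVecEqLocus T₁ T₂ ↔ zpowVecHom T₁ p.1 = zpowVecHom T₂ p.2 :=
  Iff.rfl

theorem zpowVecEqLocus_eq_ker (T₁ T₂ : ℤ × ℤ) :
    (zpowVecEqLocus T₁ T₂ : Subgroup (G × G)) =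
      (monomialHom T₁.1 (-T₂.1) T₁.2 (-T₂.2)).ker := by
  ext p
  simp [mem_zpowVecEqLocus, zpowVecHom, Prod.ext_iff, zpow_neg, mul_inv_eq_one]

theorem zpowVecEqLocus_inf_ker (T₁ T₂ : ℤ × ℤ) :
    zpowVecEqLocus T₁ T₂ ⊓ ((zpowVecHom T₁).comp (MonoidHom.fst G G)).ker =
      (zpowVecHom T₁).ker.prod (zpowVecHom T₂).ker := by
  ext p
  simp only [Subgroup.mem_inf, mem_zpowVecEqLocus, MonoidHom.mem_ker, MonoidHom.comp_apply,
    MonoidHom.coe_fst, Subgroup.mem_prod]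
  constructor
  · rintro ⟨h, h₁⟩
    exact ⟨h₁, h ▸ h₁⟩
  · rintro ⟨h₁, h₂⟩
    exact ⟨h₁.trans h₂.symm, h₁⟩

end CommGroup

section IsAlgClosed

variable {F : Type*} [Field F] [IsAlgClosed F] [CharZero F]

theorem card_ker_monomialHom_zero {a c d : ℤ} (ha : a ≠ 0) (hd : d ≠ 0) :
    Nat.card (monomialHom a 0 c d : Fˣ × Fˣ →* Fˣ × Fˣ).ker = a.natAbs * d.natAbs := by
  have hmap : (monomialHom a 0 c d).ker.map (MonoidHom.fst Fˣ Fˣ) =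
      (zpowGroupHom a : Fˣ →* Fˣ).ker := by
    ext u
    simp only [Subgroup.mem_map, MonoidHom.mem_ker, monomialHom_apply, zpow_zero, mul_one,
      Prod.mk_eq_one, MonoidHom.coe_fst, Prod.exists, exists_and_right, exists_eq_right,
      zpowGroupHom_apply]
    constructor
    · rintro ⟨v, hu, -⟩
      exact hu
    · intro hu
      obtain ⟨v, hv⟩ := IsAlgClosed.units_zpow_surjective hd (u ^ c)⁻¹
      exact ⟨v, hu, by simp only [hv, mul_inv_cancel]⟩
  have hinf : (monomialHom a 0 c d).ker ⊓ (MonoidHom.fst Fˣ Fˣ).ker =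
      (zpowGroupHom d : Fˣ →* Fˣ).ker.map (MonoidHom.inr Fˣ Fˣ) := by
    ext ⟨u, v⟩
    simp only [Subgroup.mem_inf, MonoidHom.mem_ker, monomialHom_apply, MonoidHom.coe_fst,
      Subgroup.mem_map, MonoidHom.inr_apply, zpowGroupHom_apply, Prod.mk.injEq, Prod.mk_eq_one]
    constructor
    · rintro ⟨⟨-, h⟩, rfl⟩
      exact ⟨v, by simpa using h, rfl, rfl⟩
    · rintro ⟨v, h, rfl, rfl⟩
      simp [h]
  rw [Subgroup.card_eq_card_map_mul_card_inf_ker _ (MonoidHom.fst Fˣ Fˣ), hmap, hinf,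
    Subgroup.card_map_of_injective (Prod.mk_right_injective (1 : Fˣ)),
    IsAlgClosed.card_ker_zpowGroupHom ha, IsAlgClosed.card_ker_zpowGroupHom hd]

theorem card_ker_monomialHom {a b c d : ℤ} (h : a * d - b * c ≠ 0) :
    Nat.card (monomialHom a b c d : Fˣ × Fˣ →* Fˣ × Fˣ).ker = (a * d - b * c).natAbs := by
  induction hb : b.natAbs using Nat.strong_induction_on generalizing a b c d with
  | _ n ih =>
  rcases eq_or_ne b 0 with rfl | hb0
  · rw [zero_mul, sub_zero] at h ⊢
    rw [card_ker_monomialHom_zero (left_ne_zero_of_mul h) (right_ne_zero_of_mul h),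
      Int.natAbs_mul]
  · set q := -(a / b)
    have hdet : b * (c + q * d) - (a + q * b) * d = -(a * d - b * c) := by ring
    have hlt : (a + q * b).natAbs < n := by
      have hr : a + q * b = a % b := by rw [Int.emod_def]; ring
      have hr_lt := Int.emod_lt_abs a hb0
      have hr_nonneg := Int.emod_nonneg a hb0
      rw [Int.abs_eq_natAbs] at hr_lt
      omega
    rw [← MonoidHom.card_ker_comp_mulEquiv _ MulEquiv.prodComm, monomialHom_comp_prodComm,
      ← MonoidHom.card_ker_comp_mulEquiv _ (shear q), monomialHom_comp_shear,
      ih _ hlt (by rwa [hdet, neg_ne_zero]) rfl, hdet, Int.natAbs_neg]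

theorem card_ker_zpowVecHom {T : ℤ × ℤ} (hT : 0 < Int.gcd T.1 T.2) :
    Nat.card (zpowVecHom T : Fˣ →* Fˣ × Fˣ).ker = Int.gcd T.1 T.2 := by
  rw [ker_zpowVecHom, IsAlgClosed.card_ker_powMonoidHom hT.ne']

theorem card_zpowVecEqLocus {T₁ T₂ : ℤ × ℤ} (h : T₁.1 * T₂.2 - T₁.2 * T₂.1 ≠ 0) :
    Nat.card (zpowVecEqLocus T₁ T₂ : Subgroup (Fˣ × Fˣ)) =
      (T₁.1 * T₂.2 - T₁.2 * T₂.1).natAbs := by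
  have hdet : T₁.1 * -T₂.2 - -T₂.1 * T₁.2 = -(T₁.1 * T₂.2 - T₁.2 * T₂.1) := by ring
  rw [zpowVecEqLocus_eq_ker, card_ker_monomialHom (by rwa [hdet, neg_ne_zero]), hdet,
    Int.natAbs_neg]

theorem card_map_zpowVecEqLocus {T₁ T₂ : ℤ × ℤ} (h : T₁.1 * T₂.2 - T₁.2 * T₂.1 ≠ 0) :
    Nat.card ((zpowVecEqLocus T₁ T₂ : Subgroup (Fˣ × Fˣ)).map
        ((zpowVecHom T₁).comp (MonoidHom.fst Fˣ Fˣ))) =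
      (T₁.1 * T₂.2 - T₁.2 * T₂.1).natAbs / (Int.gcd T₁.1 T₁.2 * Int.gcd T₂.1 T₂.2) := by
  have hT₁ : 0 < Int.gcd T₁.1 T₁.2 := Int.gcd_pos_iff.mpr (by contrapose! h; simp [h])
  have hT₂ : 0 < Int.gcd T₂.1 T₂.2 := Int.gcd_pos_iff.mpr (by contrapose! h; simp [h])
  rw [← card_zpowVecEqLocus (F := F) h,
    Subgroup.card_eq_card_map_mul_card_inf_ker (zpowVecEqLocus T₁ T₂)
      ((zpowVecHom T₁).comp (MonoidHom.fst Fˣ Fˣ)),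
    zpowVecEqLocus_inf_ker, Subgroup.card_prod, card_ker_zpowVecHom hT₁,
    card_ker_zpowVecHom hT₂, Nat.mul_div_cancel _ (Nat.mul_pos hT₁ hT₂)]

end IsAlgClosed

theorem zpowVec_val (u : ℂˣ) (T : ℤ × ℤ) :
    zpowVec u T = Prod.map Units.val Units.val (zpowVecHom T u) := by
  simp [zpowVec, zpowVecHom]

theorem setOf_zpowVec_eq (T₁ T₂ : ℤ × ℤ) :
    {p : ℂ × ℂ | p.1 ≠ 0 ∧ p.2 ≠ 0 ∧ zpowVec p.1 T₁ = zpowVec p.2 T₂} =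
      Prod.map Units.val Units.val '' (zpowVecEqLocus T₁ T₂ : Subgroup (ℂˣ × ℂˣ)) := by
  ext ⟨z₁, z₂⟩
  constructor
  · rintro ⟨h₁, h₂, h⟩
    refine ⟨(Units.mk0 z₁ h₁, Units.mk0 z₂ h₂), mem_zpowVecEqLocus.mpr ?_, rfl⟩
    apply Units.val_injective.prodMap Units.val_injective
    rwa [← zpowVec_val, ← zpowVec_val, Units.val_mk0, Units.val_mk0]
  · rintro ⟨⟨u, v⟩, h, ⟨⟩⟩
    refine ⟨u.ne_zero, v.ne_zero, ?_⟩
    rw [zpowVec_val, zpowVec_val]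
    exact congrArg _ h

theorem image_setOf_zpowVec_eq (T₁ T₂ : ℤ × ℤ) :
    (fun p : ℂ × ℂ ↦ zpowVec p.1 T₁) ''
        {p : ℂ × ℂ | p.1 ≠ 0 ∧ p.2 ≠ 0 ∧ zpowVec p.1 T₁ = zpowVec p.2 T₂} =
      Prod.map Units.val Units.val ''
        ((zpowVecEqLocus T₁ T₂).map ((zpowVecHom T₁).comp (MonoidHom.fst ℂˣ ℂˣ))) := by
  rw [setOf_zpowVec_eq, Subgroup.coe_map, Set.image_image, Set.image_image]
  simp [zpowVec_val]

end Torus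

open Torus in
/-- For two nonzero non-parallel integer vectors `T₁, T₂` (i.e. with nonzero determinant),
the number of pairs `(z₁, z₂) ∈ (ℂ^×)²` with `z₁^{T₁} = z₂^{T₂}` is exactly
`|det(T₁, T₂)|`, and the number of distinct common values `g = z₁^{T₁} = z₂^{T₂}` is
`|det(T₁,T₂)| / (ℓ(T₁) ℓ(T₂))` where `ℓ(T)` is the gcd of the coordinates of `T`. -/
theorem mikhalkin_multiplicity_count (T1 T2 : ℤ × ℤ)
    (hdet : T1.1 * T2.2 - T1.2 * T2.1 ≠ 0) :
    ({p : ℂ × ℂ | p.1 ≠ 0 ∧ p.2 ≠ 0 ∧ zpowVec p.1 T1 = zpowVec p.2 T2}).ncard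
      = (T1.1 * T2.2 - T1.2 * T2.1).natAbs ∧
    ((fun p : ℂ × ℂ => zpowVec p.1 T1) ''
        {p : ℂ × ℂ | p.1 ≠ 0 ∧ p.2 ≠ 0 ∧ zpowVec p.1 T1 = zpowVec p.2 T2}).ncard
      = (T1.1 * T2.2 - T1.2 * T2.1).natAbs /
          (Int.gcd T1.1 T1.2 * Int.gcd T2.1 T2.2) := by
  have hval : Function.Injective (Prod.map Units.val Units.val : ℂˣ × ℂˣ → ℂ × ℂ) :=
    Units.val_injective.prodMap Units.val_injective
  rw [image_setOf_zpowVec_eq, setOf_zpowVec_eq, Set.ncard_image_of_injective _ hval,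
    Set.ncard_image_of_injective _ hval, ← Nat.card_coe_set_eq, ← Nat.card_coe_set_eq]
  exact ⟨card_zpowVecEqLocus hdet, card_map_zpowVecEqLocus hdet⟩
end
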